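/- Let α, β, γ be natural numbers with α, β, γ ≥ 2 (or ∞) and 1/α + 1/β + 1/γ < 1. Then none of the 15 conditions of Kimura's table hold for any choice of signs and integers ℓ, m, n, and none of the four sums ±1/α ± 1/β ± 1/γ (with at most one minus sign, including all plus) is an odd integer. -/
import Mathlib

private lemma inv_bounds (x : ℕ) (hx : x = 0 ∨ 2 ≤ x) :
    0 ≤ (x:ℚ)⁻¹ ∧ (x:ℚ)⁻¹ ≤ 1/2 := by
  refine ⟨by positivity, ?_⟩
  rcases hx with rfl | hx
  · norm_num
  · rw [show (1:ℚ)/2 = (2:ℚ)⁻¹ by norm_num]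
    have h2 : (2:ℚ) ≤ (x:ℚ) := by exact_mod_cast hx
    exact inv_anti₀ (by norm_num) h2

private lemma eps_bounds (x : ℕ) (hx : x = 0 ∨ 2 ≤ x) (ε : ℚ) (hε : ε = 1 ∨ ε = -1) :
    -(1/2) ≤ ε * (x:ℚ)⁻¹ ∧ ε * (x:ℚ)⁻¹ ≤ 1/2 := by
  obtain ⟨h0, h2⟩ := inv_bounds x hx
  rcases hε with rfl | rfl <;> constructor <;>
    simp only [one_mul, neg_one_mul] <;> linarith

private lemma coreLo (x : ℕ) (hx : x = 0 ∨ 2 ≤ x) (ε : ℚ) (hε : ε = 1 ∨ ε = -1)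
    (f : ℚ) (ℓ : ℤ) (hf0 : 0 < f) (hf : f < 1/2)
    (h : ε * (x:ℚ)⁻¹ = f + ℓ) : ℓ = 0 ∧ (x:ℚ)⁻¹ = f := by
  obtain ⟨hb1, hb2⟩ := eps_bounds x hx ε hε
  rw [h] at hb1 hb2
  have l1 : (ℓ:ℚ) < 1 := by linarith
  have l2 : (-1:ℚ) < (ℓ:ℚ) := by linarith
  have hℓ : ℓ = 0 := by
    have a1 : ℓ < 1 := by exact_mod_cast l1
    have a2 : (-1:ℤ) < ℓ := by exact_mod_cast l2
    omega
  subst hℓ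
  obtain ⟨h0, _⟩ := inv_bounds x hx
  refine ⟨rfl, ?_⟩
  rcases hε with rfl | rfl
  · simpa using h
  · simp only [neg_one_mul, Int.cast_zero, add_zero] at h
    linarith

private lemma coreHi (x : ℕ) (hx : x = 0 ∨ 2 ≤ x) (ε : ℚ) (hε : ε = 1 ∨ ε = -1)
    (g : ℚ) (ℓ : ℤ) (hg : 1/2 < g) (hg1 : g < 1)
    (h : ε * (x:ℚ)⁻¹ = g + ℓ) : ℓ = -1 ∧ (x:ℚ)⁻¹ = 1 - g := by
  obtain ⟨hb1, hb2⟩ := eps_bounds x hx ε hε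
  rw [h] at hb1 hb2
  have l1 : (ℓ:ℚ) < 0 := by linarith
  have l2 : (-2:ℚ) < (ℓ:ℚ) := by linarith
  have hℓ : ℓ = -1 := by
    have a1 : ℓ < 0 := by exact_mod_cast l1
    have a2 : (-2:ℤ) < ℓ := by exact_mod_cast l2
    omega
  subst hℓ
  obtain ⟨h0, _⟩ := inv_bounds x hx
  push_cast at h
  refine ⟨rfl, ?_⟩
  rcases hε with rfl | rfl
  · rw [one_mul] at h; linarith
  · rw [neg_one_mul] at h; linarith

private lemma not25 (x : ℕ) (h : (x:ℚ)⁻¹ = 2/5) : False := by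
  have hx0 : x ≠ 0 := by rintro rfl; norm_num at h
  have hxq : (x:ℚ) ≠ 0 := Nat.cast_ne_zero.mpr hx0
  have h5 : 2 * (x:ℚ) = 5 := by field_simp at h; linarith
  have h6 : ((2*x : ℕ) : ℚ) = ((5:ℕ):ℚ) := by push_cast; linarith
  have : 2*x = 5 := by exact_mod_cast h6
  omega

private lemma abs_eps (x : ℕ) (ε : ℚ) (hε : ε = 1 ∨ ε = -1) :
    |ε * (x:ℚ)⁻¹| = (x:ℚ)⁻¹ := by
  have h0 : (0:ℚ) ≤ (x:ℚ)⁻¹ := by positivity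
  rcases hε with rfl | rfl <;>
    simp [one_mul, neg_one_mul, abs_neg, abs_of_nonneg h0]

private lemma abs_frac (f : ℚ) (hf0 : 0 ≤ f) (hf : f ≤ 1/2) (ℓ : ℤ) :
    f ≤ |f + (ℓ:ℚ)| := by
  rcases le_or_gt 0 ℓ with h | h
  · rw [le_abs]; left
    have : (0:ℚ) ≤ (ℓ:ℚ) := by exact_mod_cast h
    linarith
  · rw [le_abs]; right
    have h1 : ℓ ≤ -1 := by omega
    have : (ℓ:ℚ) ≤ -1 := by exact_mod_cast h1
    linarith

private lemma abs_sum_eq {a b c p q r : ℚ}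
    (h : ({a,b,c} : Multiset ℚ) = ({p,q,r} : Multiset ℚ)) :
    |a| + |b| + |c| = |p| + |q| + |r| := by
  have h2 := congrArg (fun s : Multiset ℚ => (s.map (fun t => |t|)).sum) h
  simp only [Multiset.insert_eq_cons, Multiset.map_cons, Multiset.map_singleton,
    Multiset.sum_cons, Multiset.sum_singleton] at h2
  linarith

private lemma mems_of_eq {a b c p q r : ℚ}
    (h : ({a,b,c} : Multiset ℚ) = ({p,q,r} : Multiset ℚ)) :
    (p = a ∨ p = b ∨ p = c) ∧ (q = a ∨ q = b ∨ q = c) ∧ (r = a ∨ r = b ∨ r = c) := by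
  have hp : p ∈ ({p,q,r} : Multiset ℚ) := by simp
  have hq : q ∈ ({p,q,r} : Multiset ℚ) := by simp
  have hr : r ∈ ({p,q,r} : Multiset ℚ) := by simp
  rw [← h] at hp hq hr
  simp only [Multiset.insert_eq_cons, Multiset.mem_cons, Multiset.mem_singleton] at hp hq hr
  exact ⟨hp, hq, hr⟩


/-- Let α, β, γ be natural numbers with α, β, γ ≥ 2 or ∞ (∞ encoded as 0, with
1/∞ = 0) and 1/α + 1/β + 1/γ < 1.  Then none of the 15 rows of Kimura's table hold
for (±α⁻¹, ±β⁻¹, ±γ⁻¹) in any order, for any choice of signs and integers ℓ, m, n,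
and none of the four sums ±1/α ± 1/β ± 1/γ with at most one minus sign is an odd
integer. -/
theorem stmt12 (α β γ : ℕ)
    (hα : α = 0 ∨ 2 ≤ α) (hβ : β = 0 ∨ 2 ≤ β) (hγ : γ = 0 ∨ 2 ≤ γ)
    (hhyp : (α : ℚ)⁻¹ + (β : ℚ)⁻¹ + (γ : ℚ)⁻¹ < 1) :
    (∀ (ℓ m n : ℤ) (ε₁ ε₂ ε₃ : ℚ),
      (ε₁ = 1 ∨ ε₁ = -1) → (ε₂ = 1 ∨ ε₂ = -1) → (ε₃ = 1 ∨ ε₃ = -1) →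
      -- row 1
      (¬ ∃ x : ℚ, ({ε₁ * (α : ℚ)⁻¹, ε₂ * (β : ℚ)⁻¹, ε₃ * (γ : ℚ)⁻¹} : Multiset ℚ) = ({1/2 + (ℓ : ℚ), 1/2 + (m : ℚ), x} : Multiset ℚ)) ∧
      -- row 2
      (¬ (({ε₁ * (α : ℚ)⁻¹, ε₂ * (β : ℚ)⁻¹, ε₃ * (γ : ℚ)⁻¹} : Multiset ℚ) = ({1/2 + (ℓ : ℚ), 1/2 + (m : ℚ), 1/2 + (n : ℚ)} : Multiset ℚ))) ∧
      -- row 3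
      (¬ (({ε₁ * (α : ℚ)⁻¹, ε₂ * (β : ℚ)⁻¹, ε₃ * (γ : ℚ)⁻¹} : Multiset ℚ) = ({2/3 + (ℓ : ℚ), 1/3 + (m : ℚ), 1/4 + (n : ℚ)} : Multiset ℚ) ∧ Even (ℓ + m + n))) ∧
      -- row 4
      (¬ (({ε₁ * (α : ℚ)⁻¹, ε₂ * (β : ℚ)⁻¹, ε₃ * (γ : ℚ)⁻¹} : Multiset ℚ) = ({1/2 + (ℓ : ℚ), 1/3 + (m : ℚ), 1/4 + (n : ℚ)} : Multiset ℚ))) ∧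
      -- row 5
      (¬ (({ε₁ * (α : ℚ)⁻¹, ε₂ * (β : ℚ)⁻¹, ε₃ * (γ : ℚ)⁻¹} : Multiset ℚ) = ({2/3 + (ℓ : ℚ), 1/4 + (m : ℚ), 1/4 + (n : ℚ)} : Multiset ℚ) ∧ Even (ℓ + m + n))) ∧
      -- row 6
      (¬ (({ε₁ * (α : ℚ)⁻¹, ε₂ * (β : ℚ)⁻¹, ε₃ * (γ : ℚ)⁻¹} : Multiset ℚ) = ({1/2 + (ℓ : ℚ), 1/3 + (m : ℚ), 1/5 + (n : ℚ)} : Multiset ℚ))) ∧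
      -- row 7
      (¬ (({ε₁ * (α : ℚ)⁻¹, ε₂ * (β : ℚ)⁻¹, ε₃ * (γ : ℚ)⁻¹} : Multiset ℚ) = ({2/5 + (ℓ : ℚ), 1/3 + (m : ℚ), 1/3 + (n : ℚ)} : Multiset ℚ) ∧ Even (ℓ + m + n))) ∧
      -- row 8
      (¬ (({ε₁ * (α : ℚ)⁻¹, ε₂ * (β : ℚ)⁻¹, ε₃ * (γ : ℚ)⁻¹} : Multiset ℚ) = ({2/3 + (ℓ : ℚ), 1/5 + (m : ℚ), 1/5 + (n : ℚ)} : Multiset ℚ) ∧ Even (ℓ + m + n))) ∧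
      -- row 9
      (¬ (({ε₁ * (α : ℚ)⁻¹, ε₂ * (β : ℚ)⁻¹, ε₃ * (γ : ℚ)⁻¹} : Multiset ℚ) = ({1/2 + (ℓ : ℚ), 2/5 + (m : ℚ), 1/5 + (n : ℚ)} : Multiset ℚ) ∧ Even (ℓ + m + n))) ∧
      -- row 10
      (¬ (({ε₁ * (α : ℚ)⁻¹, ε₂ * (β : ℚ)⁻¹, ε₃ * (γ : ℚ)⁻¹} : Multiset ℚ) = ({3/5 + (ℓ : ℚ), 1/3 + (m : ℚ), 1/5 + (n : ℚ)} : Multiset ℚ) ∧ Even (ℓ + m + n))) ∧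
      -- row 11
      (¬ (({ε₁ * (α : ℚ)⁻¹, ε₂ * (β : ℚ)⁻¹, ε₃ * (γ : ℚ)⁻¹} : Multiset ℚ) = ({2/5 + (ℓ : ℚ), 2/5 + (m : ℚ), 2/5 + (n : ℚ)} : Multiset ℚ) ∧ Even (ℓ + m + n))) ∧
      -- row 12
      (¬ (({ε₁ * (α : ℚ)⁻¹, ε₂ * (β : ℚ)⁻¹, ε₃ * (γ : ℚ)⁻¹} : Multiset ℚ) = ({2/3 + (ℓ : ℚ), 1/3 + (m : ℚ), 1/5 + (n : ℚ)} : Multiset ℚ) ∧ Even (ℓ + m + n))) ∧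
      -- row 13
      (¬ (({ε₁ * (α : ℚ)⁻¹, ε₂ * (β : ℚ)⁻¹, ε₃ * (γ : ℚ)⁻¹} : Multiset ℚ) = ({4/5 + (ℓ : ℚ), 1/5 + (m : ℚ), 1/5 + (n : ℚ)} : Multiset ℚ) ∧ Even (ℓ + m + n))) ∧
      -- row 14
      (¬ (({ε₁ * (α : ℚ)⁻¹, ε₂ * (β : ℚ)⁻¹, ε₃ * (γ : ℚ)⁻¹} : Multiset ℚ) = ({1/2 + (ℓ : ℚ), 2/5 + (m : ℚ), 1/3 + (n : ℚ)} : Multiset ℚ) ∧ Even (ℓ + m + n))) ∧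
      -- row 15
      (¬ (({ε₁ * (α : ℚ)⁻¹, ε₂ * (β : ℚ)⁻¹, ε₃ * (γ : ℚ)⁻¹} : Multiset ℚ) = ({3/5 + (ℓ : ℚ), 2/5 + (m : ℚ), 1/3 + (n : ℚ)} : Multiset ℚ) ∧ Even (ℓ + m + n)))) ∧
    (∀ s ∈ ({(α : ℚ)⁻¹ + (β : ℚ)⁻¹ + (γ : ℚ)⁻¹, -(α : ℚ)⁻¹ + (β : ℚ)⁻¹ + (γ : ℚ)⁻¹,
              (α : ℚ)⁻¹ - (β : ℚ)⁻¹ + (γ : ℚ)⁻¹, (α : ℚ)⁻¹ + (β : ℚ)⁻¹ - (γ : ℚ)⁻¹} : Set ℚ),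
      ¬ ∃ k : ℤ, s = 2 * k + 1) := by
  constructor
  · intro ℓ m n ε₁ ε₂ ε₃ hε₁ hε₂ hε₃
    have pinLo : ∀ (f : ℚ) (j : ℤ), 0 < f → f < 1/2 →
        (f + (j:ℚ) = ε₁ * (α:ℚ)⁻¹ ∨ f + (j:ℚ) = ε₂ * (β:ℚ)⁻¹ ∨ f + (j:ℚ) = ε₃ * (γ:ℚ)⁻¹) →
        j = 0 := by
      rintro f j hf0 hf (h|h|h)
      exacts [(coreLo α hα ε₁ hε₁ f j hf0 hf h.symm).1,
        (coreLo β hβ ε₂ hε₂ f j hf0 hf h.symm).1,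
        (coreLo γ hγ ε₃ hε₃ f j hf0 hf h.symm).1]
    have pinHi : ∀ (g : ℚ) (j : ℤ), 1/2 < g → g < 1 →
        (g + (j:ℚ) = ε₁ * (α:ℚ)⁻¹ ∨ g + (j:ℚ) = ε₂ * (β:ℚ)⁻¹ ∨ g + (j:ℚ) = ε₃ * (γ:ℚ)⁻¹) →
        j = -1 := by
      rintro g j hg hg1 (h|h|h)
      exacts [(coreHi α hα ε₁ hε₁ g j hg hg1 h.symm).1,
        (coreHi β hβ ε₂ hε₂ g j hg hg1 h.symm).1,
        (coreHi γ hγ ε₃ hε₃ g j hg hg1 h.symm).1]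
    have pin25 : ∀ (j : ℤ),
        (2/5 + (j:ℚ) = ε₁ * (α:ℚ)⁻¹ ∨ 2/5 + (j:ℚ) = ε₂ * (β:ℚ)⁻¹ ∨ 2/5 + (j:ℚ) = ε₃ * (γ:ℚ)⁻¹) →
        False := by
      rintro j (h|h|h)
      exacts [not25 α (coreLo α hα ε₁ hε₁ (2/5) j (by norm_num) (by norm_num) h.symm).2,
        not25 β (coreLo β hβ ε₂ hε₂ (2/5) j (by norm_num) (by norm_num) h.symm).2,
        not25 γ (coreLo γ hγ ε₃ hε₃ (2/5) j (by norm_num) (by norm_num) h.symm).2]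
    have pin35 : ∀ (j : ℤ),
        (3/5 + (j:ℚ) = ε₁ * (α:ℚ)⁻¹ ∨ 3/5 + (j:ℚ) = ε₂ * (β:ℚ)⁻¹ ∨ 3/5 + (j:ℚ) = ε₃ * (γ:ℚ)⁻¹) →
        False := by
      rintro j (h|h|h)
      · have h2 := (coreHi α hα ε₁ hε₁ (3/5) j (by norm_num) (by norm_num) h.symm).2
        exact not25 α (by rw [h2]; norm_num)
      · have h2 := (coreHi β hβ ε₂ hε₂ (3/5) j (by norm_num) (by norm_num) h.symm).2
        exact not25 β (by rw [h2]; norm_num)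
      · have h2 := (coreHi γ hγ ε₃ hε₃ (3/5) j (by norm_num) (by norm_num) h.symm).2
        exact not25 γ (by rw [h2]; norm_num)
    have habs : ∀ {p q r : ℚ},
        ({ε₁ * (α:ℚ)⁻¹, ε₂ * (β:ℚ)⁻¹, ε₃ * (γ:ℚ)⁻¹} : Multiset ℚ) = ({p,q,r} : Multiset ℚ) →
        (α:ℚ)⁻¹ + (β:ℚ)⁻¹ + (γ:ℚ)⁻¹ = |p| + |q| + |r| := by
      intro p q r h
      have hs := abs_sum_eq h
      rwa [abs_eps α ε₁ hε₁, abs_eps β ε₂ hε₂, abs_eps γ ε₃ hε₃] at hs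
    refine ⟨?_, ?_, ?_, ?_, ?_, ?_, ?_, ?_, ?_, ?_, ?_, ?_, ?_, ?_, ?_⟩
    · rintro ⟨x, heq⟩
      have hs := habs heq
      have f1 := abs_frac (1/2) (by norm_num) (by norm_num) ℓ
      have f2 := abs_frac (1/2) (by norm_num) (by norm_num) m
      have f3 := abs_nonneg x
      linarith
    · intro heq
      have hs := habs heq
      have f1 := abs_frac (1/2) (by norm_num) (by norm_num) ℓ
      have f2 := abs_frac (1/2) (by norm_num) (by norm_num) m
      have f3 := abs_frac (1/2) (by norm_num) (by norm_num) n
      linarith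
    · rintro ⟨heq, hpar⟩
      obtain ⟨h1, h2, h3⟩ := mems_of_eq heq
      have hℓ := pinHi (2/3) ℓ (by norm_num) (by norm_num) h1
      have hm := pinLo (1/3) m (by norm_num) (by norm_num) h2
      have hn := pinLo (1/4) n (by norm_num) (by norm_num) h3
      obtain ⟨k, hk⟩ := hpar
      omega
    · intro heq
      have hs := habs heq
      have f1 := abs_frac (1/2) (by norm_num) (by norm_num) ℓ
      have f2 := abs_frac (1/3) (by norm_num) (by norm_num) m
      have f3 := abs_frac (1/4) (by norm_num) (by norm_num) n
      linarith
    · rintro ⟨heq, hpar⟩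
      obtain ⟨h1, h2, h3⟩ := mems_of_eq heq
      have hℓ := pinHi (2/3) ℓ (by norm_num) (by norm_num) h1
      have hm := pinLo (1/4) m (by norm_num) (by norm_num) h2
      have hn := pinLo (1/4) n (by norm_num) (by norm_num) h3
      obtain ⟨k, hk⟩ := hpar
      omega
    · intro heq
      have hs := habs heq
      have f1 := abs_frac (1/2) (by norm_num) (by norm_num) ℓ
      have f2 := abs_frac (1/3) (by norm_num) (by norm_num) m
      have f3 := abs_frac (1/5) (by norm_num) (by norm_num) n
      linarith
    · rintro ⟨heq, -⟩
      exact pin25 ℓ (mems_of_eq heq).1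
    · rintro ⟨heq, hpar⟩
      obtain ⟨h1, h2, h3⟩ := mems_of_eq heq
      have hℓ := pinHi (2/3) ℓ (by norm_num) (by norm_num) h1
      have hm := pinLo (1/5) m (by norm_num) (by norm_num) h2
      have hn := pinLo (1/5) n (by norm_num) (by norm_num) h3
      obtain ⟨k, hk⟩ := hpar
      omega
    · rintro ⟨heq, -⟩
      exact pin25 m (mems_of_eq heq).2.1
    · rintro ⟨heq, -⟩
      exact pin35 ℓ (mems_of_eq heq).1
    · rintro ⟨heq, -⟩
      exact pin25 ℓ (mems_of_eq heq).1
    · rintro ⟨heq, hpar⟩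
      obtain ⟨h1, h2, h3⟩ := mems_of_eq heq
      have hℓ := pinHi (2/3) ℓ (by norm_num) (by norm_num) h1
      have hm := pinLo (1/3) m (by norm_num) (by norm_num) h2
      have hn := pinLo (1/5) n (by norm_num) (by norm_num) h3
      obtain ⟨k, hk⟩ := hpar
      omega
    · rintro ⟨heq, hpar⟩
      obtain ⟨h1, h2, h3⟩ := mems_of_eq heq
      have hℓ := pinHi (4/5) ℓ (by norm_num) (by norm_num) h1
      have hm := pinLo (1/5) m (by norm_num) (by norm_num) h2
      have hn := pinLo (1/5) n (by norm_num) (by norm_num) h3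
      obtain ⟨k, hk⟩ := hpar
      omega
    · rintro ⟨heq, -⟩
      exact pin25 m (mems_of_eq heq).2.1
    · rintro ⟨heq, -⟩
      exact pin35 ℓ (mems_of_eq heq).1
  · intro s hs
    rintro ⟨k, hk⟩
    obtain ⟨ha0, ha2⟩ := inv_bounds α hα
    obtain ⟨hb0, hb2⟩ := inv_bounds β hβ
    obtain ⟨hc0, hc2⟩ := inv_bounds γ hγ
    simp only [Set.mem_insert_iff, Set.mem_singleton_iff] at hs
    rcases hs with rfl | rfl | rfl | rfl <;>
    · have hk1 : (k:ℚ) < 0 := by linarith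
      have hk2 : (-1:ℚ) < (k:ℚ) := by linarith
      have a1 : k < 0 := by exact_mod_cast hk1
      have a2 : (-1:ℤ) < k := by exact_mod_cast hk2
      omega
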